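/- arXiv:2311.14217 — 6 statements merged into one kernel-verified Lean document; each statement's English description precedes it below -/
import Mathlib

section
/- Let L ∈ ℂ^{n×n}, let M ∈ ℂ^{n×r} have full column rank with columns that are right eigenvectors of L for eigenvalues λ_1,…,λ_r, and set Λ = diag(λ_1,…,λ_r). Then for any N ∈ ℂ^{r×n}, the characteristic polynomial of L + MN equals the characteristic polynomial of Λ + NM times ∏_{j=r+1}^{n}(x − λ_j), where λ_{r+1},…,λ_n are the remaining eigenvalues of L (with multiplicity). -/
/-!
From `L M = M Λ` we get `(x - L) M = M (x - Λ)` for the characteristic matrices. Over the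
fraction field of `R[x]` the matrix `x - L` is invertible, so `(x - L)⁻¹ M (x - Λ) = M`, and
Sylvester's identity `det (1 - A B) = det (1 - B A)` turns this into
`χ(L + M N) χ(Λ) = χ(L) χ(Λ + N M)`. For `Λ` diagonal, `χ(Λ)` is the part of `χ(L)` belonging
to `λ_1, …, λ_r`; cancelling it leaves the remaining factors.
-/

open Matrix Polynomial

namespace Matrix

variable {R : Type*} [CommRing R] {m k : Type*} [Fintype m] [Fintype k] [DecidableEq m]
  [DecidableEq k]

theorem det_sub_mul_mul_det_of_mul_eq_mul {A : Matrix m m R} {D : Matrix k k R}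
    {M : Matrix m k R} (N : Matrix k m R) (hA : IsUnit A.det) (h : A * M = M * D) :
    (A - M * N).det * D.det = A.det * (D - N * M).det := by
  have hM : A⁻¹ * M * D = M := by
    rw [Matrix.mul_assoc, ← h, ← Matrix.mul_assoc, nonsing_inv_mul _ hA, Matrix.one_mul]
  calc (A - M * N).det * D.det = (A * (1 - A⁻¹ * M * N)).det * D.det := by
        rw [Matrix.mul_sub, Matrix.mul_one, ← Matrix.mul_assoc, ← Matrix.mul_assoc,
          mul_nonsing_inv _ hA, Matrix.one_mul]
    _ = A.det * ((1 - N * (A⁻¹ * M)).det * D.det) := by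
        rw [det_mul, det_one_sub_mul_comm, mul_assoc]
    _ = A.det * (D - N * M).det := by
        rw [← det_mul, Matrix.sub_mul, Matrix.one_mul, Matrix.mul_assoc N, hM]

theorem charmatrix_add (A B : Matrix m m R) : charmatrix (A + B) = charmatrix A - B.map C := by
  simp only [charmatrix, RingHom.mapMatrix_apply, Matrix.map_add _ (map_add C), sub_add_eq_sub_sub]

theorem charmatrix_mul_map_C_of_mul_eq_mul {L : Matrix m m R} {Λ : Matrix k k R}
    {M : Matrix m k R} (h : L * M = M * Λ) :
    charmatrix L * M.map C = M.map C * charmatrix Λ := by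
  simp only [charmatrix, RingHom.mapMatrix_apply, Matrix.sub_mul, Matrix.mul_sub,
    ← Matrix.map_mul, h, scalar_comm (X : R[X]) (Commute.all X)]

theorem charpoly_add_mul_mul_charpoly_of_mul_eq_mul {L : Matrix m m R} {Λ : Matrix k k R}
    {M : Matrix m k R} (h : L * M = M * Λ) (N : Matrix k m R) :
    (L + M * N).charpoly * Λ.charpoly = L.charpoly * (Λ + N * M).charpoly := by
  apply IsFractionRing.injective R[X] (FractionRing R[X])
  set f := algebraMap R[X] (FractionRing R[X])
  have hL : IsUnit ((charmatrix L).map f).det := by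
    rw [← RingHom.mapMatrix_apply, ← RingHom.map_det]
    exact IsLocalization.map_units _ ⟨_, (charpoly_monic L).mem_nonZeroDivisors⟩
  have := det_sub_mul_mul_det_of_mul_eq_mul ((N.map C).map f) hL
    (by rw [← Matrix.map_mul, ← Matrix.map_mul, charmatrix_mul_map_C_of_mul_eq_mul h])
  simpa only [charpoly, map_mul, RingHom.map_det, RingHom.mapMatrix_apply, charmatrix_add,
    Matrix.map_mul, Matrix.map_sub _ (map_sub f)] using this

end Matrix

theorem Fin.prod_univ_eq_prod_castLE_mul_prod_filter_le {β : Type*} [CommMonoid β] {r n : ℕ}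
    (hr : r ≤ n) (f : Fin n → β) :
    ∏ i, f i = (∏ j : Fin r, f (Fin.castLE hr j)) *
      ∏ i ∈ Finset.univ.filter (fun i : Fin n => r ≤ (i : ℕ)), f i := by
  have himage : Finset.univ.filter (fun i : Fin n => ¬ r ≤ (i : ℕ)) =
      Finset.univ.map (Fin.castLEEmb hr) := by
    ext i
    simp only [Finset.mem_filter, Finset.mem_univ, true_and, not_le, Finset.mem_map]
    exact ⟨fun hi => ⟨⟨i, hi⟩, rfl⟩, fun ⟨j, hj⟩ => hj ▸ j.isLt⟩
  rw [← Finset.prod_filter_not_mul_prod_filter Finset.univ (fun i : Fin n => r ≤ (i : ℕ)),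
    himage, Finset.prod_map]
  rfl

theorem rado_charpoly_general (n r : ℕ) (hr : r ≤ n)
    (L : Matrix (Fin n) (Fin n) ℂ) (M : Matrix (Fin n) (Fin r) ℂ)
    (lam : Fin n → ℂ)
    (hM : L * M = M * Matrix.diagonal (fun j : Fin r => lam (Fin.castLE hr j)))
    (hchar : L.charpoly = ∏ i : Fin n, (X - C (lam i)))
    (N : Matrix (Fin r) (Fin n) ℂ) :
    (L + M * N).charpoly =
      (Matrix.diagonal (fun j : Fin r => lam (Fin.castLE hr j)) + N * M).charpoly *
        ∏ i ∈ Finset.univ.filter (fun i : Fin n => r ≤ (i : ℕ)), (X - C (lam i)) := by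
  have key := charpoly_add_mul_mul_charpoly_of_mul_eq_mul hM N
  rw [charpoly_diagonal, hchar, Fin.prod_univ_eq_prod_castLE_mul_prod_filter_le hr] at key
  refine mul_right_cancel₀ (monic_prod_of_monic Finset.univ
    (fun j : Fin r => X - C (lam (Fin.castLE hr j))) fun j _ => monic_X_sub_C _).ne_zero ?_
  rw [key]
  ring

/-- Rado's theorem: If the columns of the full-column-rank matrix `M` are
right eigenvectors of `L` for the eigenvalues `λ_1, …, λ_r` (so `L M = M Λ` with
`Λ = diag(λ_1, …, λ_r)`), and `σ(L) = {λ_1, …, λ_n}` with multiplicity (i.e.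
`charpoly L = ∏ (x - λ_i)`), then for any `N`, the characteristic polynomial of
`L + M N` equals that of `Λ + N M` times `∏_{j = r+1}^{n} (x - λ_j)`. -/
theorem rado_charpoly (n r : ℕ) (hr : r ≤ n)
    (L : Matrix (Fin n) (Fin n) ℂ) (M : Matrix (Fin n) (Fin r) ℂ)
    (lam : Fin n → ℂ)
    (hrank : LinearIndependent ℂ (fun j : Fin r => fun i : Fin n => M i j))
    (hM : L * M = M * Matrix.diagonal (fun j : Fin r => lam (Fin.castLE hr j)))
    (hchar : L.charpoly = ∏ i : Fin n, (X - C (lam i)))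
    (N : Matrix (Fin r) (Fin n) ℂ) :
    (L + M * N).charpoly =
      (Matrix.diagonal (fun j : Fin r => lam (Fin.castLE hr j)) + N * M).charpoly *
        ∏ i ∈ Finset.univ.filter (fun i : Fin n => r ≤ (i : ℕ)), (X - C (lam i)) :=
  rado_charpoly_general n r hr L M lam hM hchar N
end

section
/- Let L ∈ ℂ^{n×n} with L v = λ v and p^T v = 1. Then the multiset of eigenvalues of L + γ v p^T is obtained from that of L by replacing one occurrence of λ with λ + γ (for any scalar γ), i.e., char(L + γ v p^T)(x)·(x − λ) = char(L)(x)·(x − λ − γ). -/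
open Matrix Polynomial

lemma charpoly_eval_aux (n : ℕ) (M : Matrix (Fin n) (Fin n) ℂ) (x : ℂ) :
    M.charpoly.eval x = (x • (1 : Matrix (Fin n) (Fin n) ℂ) - M).det := by
  rw [Matrix.charpoly, ← coe_evalRingHom, RingHom.map_det]
  congr 1
  ext i j
  simp [Matrix.charmatrix, Matrix.map_apply, Matrix.one_apply]
  by_cases h : i = j <;> simp [h, Matrix.one_apply]

/-- Brauer's theorem: If `L v = λ v` and `pᵀ v = 1`, then for any scalar
`γ`, the spectrum of `L + γ v pᵀ` is that of `L` with one occurrence of `λ` replaced by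
`λ + γ`:  `char(L + γ v pᵀ)(x) (x - λ) = char(L)(x) (x - λ - γ)`. -/
theorem brauer_rank_one_shift (n : ℕ)
    (L : Matrix (Fin n) (Fin n) ℂ) (v p : Fin n → ℂ) (lam gam : ℂ)
    (hv : L.mulVec v = lam • v)
    (hp : dotProduct p v = 1) :
    (L + gam • Matrix.vecMulVec v p).charpoly * (X - C lam) =
      L.charpoly * (X - C (lam + gam)) := by
  apply Polynomial.eq_of_infinite_eval_eq
  have hfin : ({lam} ∪ {x : ℂ | L.charpoly.IsRoot x}).Finite :=
    (Set.finite_singleton lam).union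
      (Polynomial.finite_setOf_isRoot L.charpoly_monic.ne_zero)
  apply Set.Infinite.mono _ (hfin.infinite_compl)
  intro x hx
  simp only [Set.mem_compl_iff, Set.mem_union, Set.mem_singleton_iff, Set.mem_setOf_eq,
    not_or] at hx
  obtain ⟨hxl, hxr⟩ := hx
  have hdet : (x • (1 : Matrix (Fin n) (Fin n) ℂ) - L).det ≠ 0 := by
    rw [← charpoly_eval_aux]; exact hxr
  set A := x • (1 : Matrix (Fin n) (Fin n) ℂ) - L with hA
  have hAv : A.mulVec v = (x - lam) • v := by
    simp [hA, Matrix.sub_mulVec, Matrix.smul_mulVec, hv, sub_smul]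
  have hAinv : A⁻¹.mulVec v = (x - lam)⁻¹ • v := by
    have h1 : A⁻¹.mulVec (A.mulVec v) = v := by
      rw [Matrix.mulVec_mulVec, Matrix.nonsing_inv_mul _ (isUnit_iff_ne_zero.2 hdet),
        Matrix.one_mulVec]
    rw [hAv, Matrix.mulVec_smul] at h1
    calc A⁻¹.mulVec v = (x - lam)⁻¹ • ((x - lam) • A⁻¹.mulVec v) := by
            rw [smul_smul, inv_mul_cancel₀ (sub_ne_zero.2 hxl), one_smul]
      _ = (x - lam)⁻¹ • v := by rw [h1]
  have key : (x • (1 : Matrix (Fin n) (Fin n) ℂ) - (L + gam • Matrix.vecMulVec v p))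
      = A + Matrix.replicateCol Unit (-(gam • v)) * Matrix.replicateRow Unit p := by
    rw [Matrix.vecMulVec_eq Unit]
    ext i j
    simp [hA, Matrix.mul_apply, Matrix.replicateCol, Matrix.replicateRow]
    ring
  have hentry : (1 + Matrix.replicateRow Unit p * A⁻¹ * Matrix.replicateCol Unit (-(gam • v))).det
      = 1 - gam * (x - lam)⁻¹ := by
    rw [Matrix.det_unique]
    simp only [Matrix.add_apply, Matrix.one_apply_eq, Matrix.mul_assoc]
    have : A⁻¹ * Matrix.replicateCol Unit (-(gam • v)) = Matrix.replicateCol Unit (A⁻¹.mulVec (-(gam • v))) := by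
      ext i j
      simp [Matrix.mul_apply, Matrix.replicateCol, Matrix.mulVec, dotProduct]
    rw [this, Matrix.replicateRow_mul_replicateCol_apply]
    have : A⁻¹.mulVec (-(gam • v)) = (-(gam * (x - lam)⁻¹)) • v := by
      rw [Matrix.mulVec_neg, Matrix.mulVec_smul, hAinv]
      module
    rw [this, dotProduct_smul, hp, smul_eq_mul, mul_one]
    ring
  simp only [Set.mem_setOf_eq, eval_mul, eval_sub, eval_X, eval_C, eval_add]
  rw [charpoly_eval_aux, charpoly_eval_aux, key,
    Matrix.det_add_replicateCol_mul_replicateRow (isUnit_iff_ne_zero.2 hdet), hentry]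
  have hxl' : x - lam ≠ 0 := sub_ne_zero.2 hxl
  field_simp
  rw [hA]; ring
end

section
/- Let H = [[A, −D],[−Q, −A^T]] be the Hamiltonian matrix of an ARE with Q, D symmetric, and let v be a unit eigenvector of H with real eigenvalue λ. Define p = (J + I)v and q = Jv, where J = [[0, I],[−I, 0]]. Then for any Δλ ∈ ℝ, the matrix H̃ := H + Δλ (v p^T − q q^T) is again a Hamiltonian matrix, i.e., (J H̃)^T = J H̃. -/
open Matrix

lemma my_mul_vecMulVec {m : Type*} [Fintype m] (M : Matrix m m ℝ) (a b : m → ℝ) :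
    M * Matrix.vecMulVec a b = Matrix.vecMulVec (M.mulVec a) b := by
  ext i j
  simp [Matrix.mul_apply, Matrix.vecMulVec_apply, Matrix.mulVec, dotProduct,
    Finset.sum_mul, mul_assoc]

lemma my_vecMulVec_transpose {m : Type*} (a b : m → ℝ) :
    (Matrix.vecMulVec a b)ᵀ = Matrix.vecMulVec b a := by
  ext i j
  simp [Matrix.vecMulVec_apply, mul_comm]

/-- Let `H = [[A, -D], [-Q, -Aᵀ]]` with `Q, D` symmetric, and let `v` be a
unit eigenvector of `H` with real eigenvalue `λ`. With `p = (J + I) v`, `q = J v`, for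
any `Δλ ∈ ℝ` the matrix `H̃ = H + Δλ (v pᵀ - q qᵀ)` is again Hamiltonian. -/
theorem perturbed_is_hamiltonian (n : ℕ)
    (A Q D : Matrix (Fin n) (Fin n) ℝ) (hQ : Qᵀ = Q) (hD : Dᵀ = D)
    (J : Matrix (Fin n ⊕ Fin n) (Fin n ⊕ Fin n) ℝ)
    (hJ : J = Matrix.fromBlocks 0 1 (-1) 0)
    (H : Matrix (Fin n ⊕ Fin n) (Fin n ⊕ Fin n) ℝ)
    (hH : H = Matrix.fromBlocks A (-D) (-Q) (-Aᵀ))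
    (lam : ℝ) (v : (Fin n ⊕ Fin n) → ℝ)
    (hv : H.mulVec v = lam • v)
    (hunit : dotProduct v v = 1)
    (p q : (Fin n ⊕ Fin n) → ℝ)
    (hp : p = (J + 1).mulVec v) (hq : q = J.mulVec v)
    (dlam : ℝ)
    (Ht : Matrix (Fin n ⊕ Fin n) (Fin n ⊕ Fin n) ℝ)
    (hHt : Ht = H + dlam • (Matrix.vecMulVec v p - Matrix.vecMulVec q q)) :
    (J * Ht)ᵀ = J * Ht := by
  have hJH : (J * H)ᵀ = J * H := by
    subst hJ hH
    simp [Matrix.fromBlocks_multiply, Matrix.fromBlocks_transpose, hQ, hD]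
  have hJJ : J * J = -1 := by
    subst hJ
    simp [Matrix.fromBlocks_multiply]
    ext i j
    rcases i with i | i <;> rcases j with j | j <;>
      simp [Matrix.fromBlocks, Matrix.one_apply]
  have hpq : p = q + v := by
    subst hp hq
    rw [Matrix.add_mulVec, Matrix.one_mulVec]
  have hJq : J.mulVec q = -v := by
    subst hq
    rw [Matrix.mulVec_mulVec, hJJ]
    rw [Matrix.neg_mulVec, Matrix.one_mulVec]
  have key : J * (Matrix.vecMulVec v p - Matrix.vecMulVec q q)
      = Matrix.vecMulVec q q + Matrix.vecMulVec q v + Matrix.vecMulVec v q := by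
    rw [Matrix.mul_sub, my_mul_vecMulVec, my_mul_vecMulVec, hJq, ← hq, hpq]
    ext i j
    simp [Matrix.vecMulVec_apply]
    ring
  subst hHt
  rw [Matrix.mul_add, Matrix.mul_smul, key, Matrix.transpose_add, hJH,
    Matrix.transpose_smul]
  congr 1
  rw [Matrix.transpose_add, Matrix.transpose_add, my_vecMulVec_transpose,
    my_vecMulVec_transpose, my_vecMulVec_transpose]
  abel
end

section
/- Let H be a Hamiltonian matrix with unit real eigenvector v for real eigenvalue λ, and p = (J+I)v, q = Jv. Then the multiset of eigenvalues of H̃ = H + Δλ(v p^T − q q^T) is obtained from that of H by replacing λ with λ + Δλ and −λ with −λ − Δλ. -/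
open Matrix Polynomial

lemma my_eval_charpoly {m : Type*} [Fintype m] [DecidableEq m]
    (M : Matrix m m ℝ) (x : ℝ) :
    (M.charpoly).eval x = (x • (1 : Matrix m m ℝ) - M).det := by
  rw [Matrix.charpoly, show (Polynomial.eval x : ℝ[X] → ℝ) = ⇑(Polynomial.evalRingHom x) from rfl,
    RingHom.map_det]
  congr 1
  ext i j
  by_cases h : i = j
  · subst h
    simp [Matrix.charmatrix_apply_eq, Matrix.one_apply]
  · simp [Matrix.charmatrix_apply_ne _ _ _ h, Matrix.one_apply, h]

lemma my_vecMulVec_mulVec {m : Type*} [Fintype m] (a b v : m → ℝ) :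
    (Matrix.vecMulVec a b) *ᵥ v = (b ⬝ᵥ v) • a := by
  ext i
  simp only [Matrix.mulVec, Matrix.vecMulVec_apply, dotProduct, Pi.smul_apply,
    smul_eq_mul, Finset.sum_mul]
  exact Finset.sum_congr rfl fun j _ => by ring

lemma my_vecMul_smul_one {m : Type*} [Fintype m] [DecidableEq m] (x : ℝ) (q : m → ℝ) :
    q ᵥ* (x • (1 : Matrix m m ℝ)) = x • q := by
  ext i
  simp [Matrix.vecMul, dotProduct, Matrix.smul_apply, Matrix.one_apply, mul_ite,
    mul_comm]

set_option maxHeartbeats 1000000 in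
/-- Let `H` be Hamiltonian with unit real eigenvector `v` for the simple
real eigenvalue `λ` (and `-λ` also simple), and `p = (J + I) v`, `q = J v`. Then the
multiset of eigenvalues of `H̃ = H + Δλ (v pᵀ - q qᵀ)` is that of `H` with `λ`
replaced by `λ + Δλ` and `-λ` replaced by `-λ - Δλ`. -/
theorem eigenvalue_shift_spectrum (n : ℕ)
    (H : Matrix (Fin n ⊕ Fin n) (Fin n ⊕ Fin n) ℝ)
    (J : Matrix (Fin n ⊕ Fin n) (Fin n ⊕ Fin n) ℝ)
    (hJ : J = Matrix.fromBlocks 0 1 (-1) 0)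
    (hHam : (J * H)ᵀ = J * H)
    (lam : ℝ) (v : (Fin n ⊕ Fin n) → ℝ)
    (hv : H.mulVec v = lam • v)
    (hunit : dotProduct v v = 1)
    (hsimple : Polynomial.rootMultiplicity lam H.charpoly = 1)
    (hsimple' : Polynomial.rootMultiplicity (-lam) H.charpoly = 1)
    (p q : (Fin n ⊕ Fin n) → ℝ)
    (hp : p = (J + 1).mulVec v) (hq : q = J.mulVec v)
    (dlam : ℝ)
    (Ht : Matrix (Fin n ⊕ Fin n) (Fin n ⊕ Fin n) ℝ)
    (hHt : Ht = H + dlam • (Matrix.vecMulVec v p - Matrix.vecMulVec q q)) :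
    Ht.charpoly * (X - C lam) * (X - C (-lam)) =
      H.charpoly * (X - C (lam + dlam)) * (X - C (-lam - dlam)) := by
  classical
  -- basic structural facts about J
  have hJT : Jᵀ = -J := by
    rw [hJ, Matrix.fromBlocks_transpose]
    simp [Matrix.fromBlocks_neg]
  have hJJ : J * J = -1 := by
    rw [hJ, Matrix.fromBlocks_multiply]
    ext i j
    cases i <;> cases j <;> simp [Matrix.one_apply]
  -- H^T J = -(J H)
  have hHTJ : Hᵀ * J = -(J * H) := by
    have := hHam
    rw [Matrix.transpose_mul, hJT, Matrix.mul_neg] at this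
    linear_combination (norm := noncomm_ring) -this
  -- q is a left eigenvector: q ᵥ* H = (-lam) • q
  have hqH : q ᵥ* H = (-lam) • q := by
    rw [hq, ← Matrix.mulVec_transpose, Matrix.mulVec_mulVec, hHTJ, Matrix.neg_mulVec,
      ← Matrix.mulVec_mulVec, hv]
    simp [Matrix.mulVec_smul]
  -- dot product facts
  have hvq : v ⬝ᵥ q = 0 := by
    have h1 : v ᵥ* J = -q := by
      rw [hq, ← Matrix.mulVec_transpose, hJT, Matrix.neg_mulVec]
    have h2 : v ⬝ᵥ q = -(v ⬝ᵥ q) := by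
      calc v ⬝ᵥ q = v ⬝ᵥ (J *ᵥ v) := by rw [hq]
      _ = (v ᵥ* J) ⬝ᵥ v := Matrix.dotProduct_mulVec v J v
      _ = -(q ⬝ᵥ v) := by rw [h1]; simp
      _ = -(v ⬝ᵥ q) := by rw [dotProduct_comm]
    linarith
  have hqv : q ⬝ᵥ v = 0 := by rw [dotProduct_comm]; exact hvq
  have hqq : q ⬝ᵥ q = 1 := by
    have h1 : q ᵥ* J = v := by
      rw [hq, ← Matrix.mulVec_transpose, hJT, Matrix.neg_mulVec, Matrix.mulVec_mulVec, hJJ]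
      simp [Matrix.neg_mulVec]
    calc q ⬝ᵥ q = q ⬝ᵥ (J *ᵥ v) := by rw [hq]
    _ = (q ᵥ* J) ⬝ᵥ v := Matrix.dotProduct_mulVec q J v
    _ = 1 := by rw [h1, hunit]
  have hpv : p ⬝ᵥ v = 1 := by
    have : p = q + v := by
      rw [hp, hq, Matrix.add_mulVec, Matrix.one_mulVec]
    rw [this, add_dotProduct, hqv, hunit]
    ring
  -- the main polynomial identity via evaluation at infinitely many points
  have hmono := Matrix.charpoly_monic H
  set f : ℝ[X] := H.charpoly * ((X - C lam) * (X - C (-lam)) * (X - C (lam + dlam)) *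
      (X - C (-lam - dlam))) with hf
  have hf0 : f ≠ 0 := by
    refine mul_ne_zero hmono.ne_zero ?_
    refine ((((monic_X_sub_C lam).mul (monic_X_sub_C (-lam))).mul
      (monic_X_sub_C (lam + dlam))).mul (monic_X_sub_C (-lam - dlam))).ne_zero
  apply Polynomial.eq_of_infinite_eval_eq
  apply Set.Infinite.mono (s := {x : ℝ | f.IsRoot x}ᶜ)
  · intro x hx
    simp only [Set.mem_compl_iff, Set.mem_setOf_eq, Polynomial.IsRoot, hf] at hx
    simp only [Polynomial.eval_mul, Polynomial.eval_sub, Polynomial.eval_X, Polynomial.eval_C,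
      mul_eq_zero, not_or] at hx
    obtain ⟨hc, ⟨⟨h1, h2⟩, h3⟩, h4⟩ := hx
    have hxl : x - lam ≠ 0 := h1
    have hxl' : x + lam ≠ 0 := by intro h; apply h2; linarith
    have hxd : x + lam + dlam ≠ 0 := by intro h; apply h4; linarith
    -- set up A = x I - H
    set A : Matrix (Fin n ⊕ Fin n) (Fin n ⊕ Fin n) ℝ :=
      x • (1 : Matrix (Fin n ⊕ Fin n) (Fin n ⊕ Fin n) ℝ) - H with hAdef
    have hdetA : A.det ≠ 0 := by
      rw [← my_eval_charpoly]; exact hc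
    have hAunit : IsUnit A.det := isUnit_iff_ne_zero.mpr hdetA
    -- left eigen relation for A
    have hqA : q ᵥ* A = (x + lam) • q := by
      rw [hAdef, Matrix.vecMul_sub, hqH, my_vecMul_smul_one]
      ext i; simp; ring
    have hqAinv : q ᵥ* A⁻¹ = (x + lam)⁻¹ • q := by
      have h : (q ᵥ* A) ᵥ* A⁻¹ = q := by
        rw [Matrix.vecMul_vecMul, Matrix.mul_nonsing_inv _ hAunit, Matrix.vecMul_one]
      rw [hqA, Matrix.smul_vecMul] at h
      rw [eq_comm, inv_smul_eq_iff₀ hxl']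
      exact h.symm
    -- first rank-one update
    set A1 : Matrix (Fin n ⊕ Fin n) (Fin n ⊕ Fin n) ℝ :=
      A + Matrix.replicateCol (Fin 1) (dlam • q) * Matrix.replicateRow (Fin 1) q with hA1def
    have hdetA1 : A1.det = A.det * (1 + dlam * (x + lam)⁻¹) := by
      erw [hA1def, Matrix.det_add_replicateCol_mul_replicateRow hAunit, ← Matrix.replicateRow_vecMul, hqAinv]
      congr 1
      simp only [Matrix.det_unique, Matrix.add_apply, Matrix.one_apply_eq,
        Matrix.replicateRow_mul_replicateCol_apply, smul_dotProduct, dotProduct_smul, hqq,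
        smul_eq_mul]
      ring
    have hdetA1' : A1.det ≠ 0 := by
      rw [hdetA1]
      refine mul_ne_zero hdetA ?_
      intro h
      apply hxd
      have : (x + lam) * (1 + dlam * (x + lam)⁻¹) = 0 := by rw [h]; ring
      field_simp at this
      linarith
    have hA1unit : IsUnit A1.det := isUnit_iff_ne_zero.mpr hdetA1'
    -- right eigen relation for A1
    have hAv : A *ᵥ v = (x - lam) • v := by
      rw [hAdef, Matrix.sub_mulVec, Matrix.smul_mulVec, Matrix.one_mulVec, hv]
      ext i; simp; ring
    have hA1v : A1 *ᵥ v = (x - lam) • v := by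
      erw [hA1def, Matrix.add_mulVec, hAv, ← Matrix.vecMulVec_eq (Fin 1), my_vecMulVec_mulVec, hqv]
      simp
    have hA1invv : A1⁻¹ *ᵥ v = (x - lam)⁻¹ • v := by
      have h : A1⁻¹ *ᵥ (A1 *ᵥ v) = v := by
        rw [Matrix.mulVec_mulVec, Matrix.nonsing_inv_mul _ hA1unit, Matrix.one_mulVec]
      rw [hA1v, Matrix.mulVec_smul] at h
      rw [eq_comm, inv_smul_eq_iff₀ hxl]
      exact h.symm
    -- the shifted matrix as a rank-one update of A1
    have hHtA : x • (1 : Matrix (Fin n ⊕ Fin n) (Fin n ⊕ Fin n) ℝ) - Ht =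
        A1 + Matrix.replicateCol (Fin 1) ((-dlam) • v) * Matrix.replicateRow (Fin 1) p := by
      erw [hHt, hA1def, hAdef, ← Matrix.vecMulVec_eq (Fin 1), ← Matrix.vecMulVec_eq (Fin 1)]
      ext i j
      simp [Matrix.vecMulVec_apply, Matrix.sub_apply, Matrix.add_apply, Matrix.smul_apply]
      ring
    have hdetHt : (x • (1 : Matrix (Fin n ⊕ Fin n) (Fin n ⊕ Fin n) ℝ) - Ht).det =
        A1.det * (1 + (-dlam) * (x - lam)⁻¹) := by
      erw [hHtA, Matrix.det_add_replicateCol_mul_replicateRow hA1unit, Matrix.mul_assoc, ← Matrix.replicateCol_mulVec,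
        Matrix.mulVec_smul, hA1invv]
      congr 1
      simp only [Matrix.det_unique, Matrix.add_apply, Matrix.one_apply_eq,
        Matrix.replicateRow_mul_replicateCol_apply, smul_dotProduct, dotProduct_smul, hpv,
        smul_eq_mul]
      ring
    -- now evaluate both sides
    show _ = _
    simp only [Set.mem_setOf_eq, Polynomial.eval_mul, Polynomial.eval_sub, Polynomial.eval_X,
      Polynomial.eval_C, my_eval_charpoly]
    rw [hdetHt, hdetA1, ← hAdef]
    field_simp
    ring
  · exact (Polynomial.finite_setOf_isRoot hf0).infinite_compl
end

section
/- Let (μ, v_j) and (−μ, v_{−j}) be right eigenpairs of a real Hamiltonian matrix H with μ complex, θ = (v_j^T J v_{−j})^{−1}, p_j = θ J v_{−j}, q_j = θ J v_j. Then for any Δμ ∈ ℝ, the real matrix H̃ := H + 2Δμ Re(v_j p_j^T + v_{−j} q_j^T) is a Hamiltonian matrix. -/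
open Matrix

private lemma vecMulVec_mulVec_right {m : Type*} [Fintype m]
    (a b : m → ℂ) (M : Matrix m m ℂ) :
    Matrix.vecMulVec a (M.mulVec b) = Matrix.vecMulVec a b * Mᵀ := by
  ext i j
  simp [Matrix.vecMulVec_apply, Matrix.mulVec, Matrix.mul_apply,
    dotProduct, Finset.mul_sum, mul_comm, mul_left_comm]

private lemma vecMulVec_smul_right {m : Type*} (a b : m → ℂ) (c : ℂ) :
    Matrix.vecMulVec a (c • b) = c • Matrix.vecMulVec a b := by
  ext i j
  simp [Matrix.vecMulVec_apply, mul_comm, mul_left_comm]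

private lemma real_mul_map_re {m : Type*} [Fintype m] [DecidableEq m]
    (A : Matrix m m ℝ) (M : Matrix m m ℂ) :
    A * M.map Complex.re = ((A.map Complex.ofReal) * M).map Complex.re := by
  ext i j
  simp [Matrix.mul_apply, Matrix.map_apply, Complex.re_sum, Complex.mul_re]

/-- With right eigenpairs `(μ, v_j)` and `(-μ, v_{-j})` of the real
Hamiltonian matrix `H` (`μ` complex), `θ = (v_jᵀ J v_{-j})⁻¹`, `p_j = θ J v_{-j}`,
`q_j = θ J v_j`, the real matrix `H̃ = H + 2 Δμ Re(v_j p_jᵀ + v_{-j} q_jᵀ)` is a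
Hamiltonian matrix, for any `Δμ ∈ ℝ`. -/
theorem complex_perturbed_is_hamiltonian (n : ℕ)
    (H : Matrix (Fin n ⊕ Fin n) (Fin n ⊕ Fin n) ℝ)
    (J : Matrix (Fin n ⊕ Fin n) (Fin n ⊕ Fin n) ℝ)
    (hJ : J = Matrix.fromBlocks 0 1 (-1) 0)
    (hHam : (J * H)ᵀ = J * H)
    (mu : ℂ) (hmu : mu.im ≠ 0)
    (vj vmj : (Fin n ⊕ Fin n) → ℂ)
    (hvj : (H.map Complex.ofReal).mulVec vj = mu • vj)
    (hvmj : (H.map Complex.ofReal).mulVec vmj = (-mu) • vmj)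
    (hnz : dotProduct vj ((J.map Complex.ofReal).mulVec vmj) ≠ 0)
    (theta : ℂ)
    (htheta : theta = (dotProduct vj ((J.map Complex.ofReal).mulVec vmj))⁻¹)
    (pj qj : (Fin n ⊕ Fin n) → ℂ)
    (hp : pj = theta • (J.map Complex.ofReal).mulVec vmj)
    (hq : qj = theta • (J.map Complex.ofReal).mulVec vj)
    (dmu : ℝ)
    (Ht : Matrix (Fin n ⊕ Fin n) (Fin n ⊕ Fin n) ℝ)
    (hHt : Ht = H + (2 * dmu) •
      ((Matrix.vecMulVec vj pj + Matrix.vecMulVec vmj qj).map Complex.re)) :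
    (J * Ht)ᵀ = J * Ht := by
  have hJc : (J.map Complex.ofReal * (Matrix.vecMulVec vj pj + Matrix.vecMulVec vmj qj))ᵀ
      = J.map Complex.ofReal * (Matrix.vecMulVec vj pj + Matrix.vecMulVec vmj qj) := by
    have hM : Matrix.vecMulVec vj pj + Matrix.vecMulVec vmj qj
        = theta • ((Matrix.vecMulVec vj vmj + Matrix.vecMulVec vmj vj)
            * (J.map Complex.ofReal)ᵀ) := by
      rw [hp, hq, vecMulVec_smul_right, vecMulVec_smul_right,
        vecMulVec_mulVec_right, vecMulVec_mulVec_right]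
      rw [Matrix.add_mul]
      simp [smul_add]
    rw [hM]
    have hS : (Matrix.vecMulVec vj vmj + Matrix.vecMulVec vmj vj)ᵀ
        = Matrix.vecMulVec vj vmj + Matrix.vecMulVec vmj vj := by
      ext i j
      simp [Matrix.transpose_apply, Matrix.vecMulVec_apply, mul_comm, add_comm]
    rw [Matrix.mul_smul, ← Matrix.mul_assoc, Matrix.transpose_smul,
      Matrix.transpose_mul, Matrix.transpose_mul, Matrix.transpose_transpose, hS,
      Matrix.mul_assoc]
  rw [hHt, Matrix.mul_add, Matrix.transpose_add, hHam, Matrix.mul_smul,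
    Matrix.transpose_smul, real_mul_map_re, ← Matrix.transpose_map, hJc]
end

section
/- Let D, F ∈ ℝ^{n×n} be symmetric with D positive semidefinite and ker(D) ⊆ ker(F). Let μ_min(D) be the minimum nonzero eigenvalue of D, and λ_min(F), λ_max(F) the extreme eigenvalues of F (assumed λ_min(F) < 0 < λ_max(F)). Then for any Δλ with −μ_min(D)/λ_max(F) ≤ Δλ ≤ −μ_min(D)/λ_min(F), the matrix D + Δλ·F is positive semidefinite. -/
open Matrix

section helpers
variable {n : ℕ} {A : Matrix (Fin n) (Fin n) ℝ} (hA : A.IsHermitian)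

lemma coef_quad (y : Fin n → ℝ) :
    y ⬝ᵥ (A *ᵥ y) = ∑ i, hA.eigenvalues i *
      ((star (hA.eigenvectorUnitary : Matrix (Fin n) (Fin n) ℝ) *ᵥ y) i)^2 := by
  set U : Matrix (Fin n) (Fin n) ℝ := (hA.eigenvectorUnitary : Matrix (Fin n) (Fin n) ℝ) with hU
  set c : Fin n → ℝ := star U *ᵥ y with hc
  have hUs : U * star U = 1 := (mem_unitaryGroup_iff).mp hA.eigenvectorUnitary.2
  have hyc : U *ᵥ c = y := by rw [hc, mulVec_mulVec, hUs, one_mulVec]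
  have hsU : star U = Uᵀ := by
    simp [star, conjTranspose]
  have hdiag : star U * A * U = diagonal hA.eigenvalues := by
    have := hA.conjStarAlgAut_star_eigenvectorUnitary
    simpa using this
  calc y ⬝ᵥ (A *ᵥ y) = c ⬝ᵥ ((star U * A * U) *ᵥ c) := by
        rw [← mulVec_mulVec, ← mulVec_mulVec, hyc, hsU,
          dotProduct_mulVec c Uᵀ _, vecMul_transpose, hyc]
      _ = ∑ i, hA.eigenvalues i * (c i)^2 := by
        rw [hdiag]
        simp [dotProduct, mulVec_diagonal, Finset.mul_sum]
        congr 1; ext i; ring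

lemma coef_norm (y : Fin n → ℝ) :
    y ⬝ᵥ y = ∑ i, ((star (hA.eigenvectorUnitary : Matrix (Fin n) (Fin n) ℝ) *ᵥ y) i)^2 := by
  set U : Matrix (Fin n) (Fin n) ℝ := (hA.eigenvectorUnitary : Matrix (Fin n) (Fin n) ℝ) with hU
  set c : Fin n → ℝ := star U *ᵥ y with hc
  have hUs : U * star U = 1 := (mem_unitaryGroup_iff).mp hA.eigenvectorUnitary.2
  have hUs' : star U * U = 1 := (mem_unitaryGroup_iff').mp hA.eigenvectorUnitary.2
  have hyc : U *ᵥ c = y := by rw [hc, mulVec_mulVec, hUs, one_mulVec]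
  have hsU : star U = Uᵀ := by simp [star, conjTranspose]
  calc y ⬝ᵥ y = c ⬝ᵥ ((star U * U) *ᵥ c) := by
        rw [← mulVec_mulVec, hyc, hsU, dotProduct_mulVec c Uᵀ _, vecMul_transpose, hyc]
      _ = ∑ i, (c i)^2 := by rw [hUs', one_mulVec]; simp [dotProduct, sq]

lemma rayleigh_bounds (a b : ℝ) (h : ∀ j, a ≤ hA.eigenvalues j ∧ hA.eigenvalues j ≤ b)
    (y : Fin n → ℝ) :
    a * (y ⬝ᵥ y) ≤ y ⬝ᵥ (A *ᵥ y) ∧ y ⬝ᵥ (A *ᵥ y) ≤ b * (y ⬝ᵥ y) := by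
  rw [coef_quad hA y, coef_norm hA y, Finset.mul_sum, Finset.mul_sum]
  constructor <;> apply Finset.sum_le_sum <;> intro i _
  · exact mul_le_mul_of_nonneg_right (h i).1 (sq_nonneg _)
  · exact mul_le_mul_of_nonneg_right (h i).2 (sq_nonneg _)

end helpers

/-- Let `D, F` be real symmetric with `D ⪰ 0` and `ker D ⊆ ker F`.
Let `μmin` be the minimum nonzero eigenvalue of `D` and `λminF < 0 < λmaxF` the extreme
eigenvalues of `F`. Then for `-μmin / λmaxF ≤ Δλ ≤ -μmin / λminF`, the matrix
`D + Δλ F` is positive semidefinite. -/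
theorem perturbed_posSemidef (n : ℕ)
    (D F : Matrix (Fin n) (Fin n) ℝ)
    (hD : D.PosSemidef) (hFsym : Fᵀ = F)
    (hker : ∀ x : Fin n → ℝ, D.mulVec x = 0 → F.mulVec x = 0)
    (mumin : ℝ)
    (hmu : IsLeast {t : ℝ | t ≠ 0 ∧ ∃ x : Fin n → ℝ, x ≠ 0 ∧ D.mulVec x = t • x} mumin)
    (lminF lmaxF : ℝ)
    (hlmin : IsLeast {t : ℝ | ∃ x : Fin n → ℝ, x ≠ 0 ∧ F.mulVec x = t • x} lminF)
    (hlmax : IsGreatest {t : ℝ | ∃ x : Fin n → ℝ, x ≠ 0 ∧ F.mulVec x = t • x} lmaxF)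
    (hneg : lminF < 0) (hpos : 0 < lmaxF)
    (dlam : ℝ)
    (hlb : -mumin / lmaxF ≤ dlam) (hub : dlam ≤ -mumin / lminF) :
    (D + dlam • F).PosSemidef := by
  have hDh : D.IsHermitian := hD.1
  have hFh : F.IsHermitian := by
    rw [IsHermitian, conjTranspose_eq_transpose_of_trivial]; exact hFsym
  have dps : ∀ y : Fin n → ℝ, 0 ≤ y ⬝ᵥ y :=
    fun y => Finset.sum_nonneg fun i _ => mul_self_nonneg _
  -- mumin > 0
  have hmupos : 0 < mumin := by
    obtain ⟨hne, x, hx0, hxe⟩ := hmu.1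
    have h1 : 0 ≤ x ⬝ᵥ (D *ᵥ x) := by simpa using hD.dotProduct_mulVec_nonneg x
    rw [hxe] at h1
    have h2 : x ⬝ᵥ (mumin • x) = mumin * (x ⬝ᵥ x) := by
      simp [dotProduct, Finset.mul_sum, mul_left_comm]
    have hxx : 0 < x ⬝ᵥ x :=
      lt_of_le_of_ne (dps x) fun h => hx0 (dotProduct_self_eq_zero.mp h.symm)
    rcases lt_trichotomy mumin 0 with h | h | h
    · nlinarith
    · exact absurd h hne
    · exact h
  -- eigenvalue facts for F
  have hFev : ∀ j, lminF ≤ hFh.eigenvalues j ∧ hFh.eigenvalues j ≤ lmaxF := by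
    intro j
    have h0 := hFh.eigenvectorBasis.orthonormal.ne_zero j
    have hnz : (⇑(hFh.eigenvectorBasis j) : Fin n → ℝ) ≠ 0 := by
      intro h; exact h0 (by ext i; exact congrFun h i)
    have hmem : hFh.eigenvalues j ∈ {t : ℝ | ∃ x : Fin n → ℝ, x ≠ 0 ∧ F.mulVec x = t • x} :=
      ⟨_, hnz, hFh.mulVec_eigenvectorBasis j⟩
    exact ⟨hlmin.2 hmem, hlmax.2 hmem⟩
  -- eigenvalue facts for D
  have hDev2 : ∀ j, hDh.eigenvalues j ≠ 0 → mumin ≤ hDh.eigenvalues j := by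
    intro j hj
    have h0 := hDh.eigenvectorBasis.orthonormal.ne_zero j
    have hnz : (⇑(hDh.eigenvectorBasis j) : Fin n → ℝ) ≠ 0 := by
      intro h; exact h0 (by ext i; exact congrFun h i)
    exact hmu.2 ⟨hj, _, hnz, hDh.mulVec_eigenvectorBasis j⟩
  have hDsymT : Dᵀ = D := by
    ext i j
    have := congrFun (congrFun hDh.eq i) j
    simpa using this
  have hMsymT : (D + dlam • F)ᵀ = D + dlam • F := by
    rw [transpose_add, transpose_smul, hFsym, hDsymT]
  rw [posSemidef_iff_dotProduct_mulVec]
  constructor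
  · rw [IsHermitian, conjTranspose_eq_transpose_of_trivial]; exact hMsymT
  intro x
  have hstar : star x = x := by ext i; simp
  rw [hstar]
  -- decomposition
  set U : Matrix (Fin n) (Fin n) ℝ := (hDh.eigenvectorUnitary : Matrix (Fin n) (Fin n) ℝ) with hU
  set μ : Fin n → ℝ := hDh.eigenvalues with hμ
  set c : Fin n → ℝ := star U *ᵥ x with hc
  set c₂ : Fin n → ℝ := fun i => if μ i = 0 then 0 else c i with hc₂
  set x₂ : Fin n → ℝ := U *ᵥ c₂ with hx₂
  set x₁ : Fin n → ℝ := x - x₂ with hx₁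
  have hUs' : star U * U = 1 := (mem_unitaryGroup_iff').mp hDh.eigenvectorUnitary.2
  have hcx₂ : star U *ᵥ x₂ = c₂ := by rw [hx₂, mulVec_mulVec, hUs', one_mulVec]
  have hDx₁ : D *ᵥ x₁ = 0 := by
    have h1 : star U *ᵥ x₁ = c - c₂ := by rw [hx₁, mulVec_sub, hcx₂, ← hc]
    have h2 : diagonal μ *ᵥ (c - c₂) = 0 := by
      ext i; by_cases h : μ i = 0 <;> simp [mulVec_diagonal, hc₂, h]
    calc D *ᵥ x₁ = U *ᵥ (diagonal μ *ᵥ (star U *ᵥ x₁)) := by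
          conv_lhs => rw [hDh.spectral_theorem]
          simp [← mulVec_mulVec]
          rfl
      _ = 0 := by rw [h1, h2, mulVec_zero]
  have hFx₁ : F *ᵥ x₁ = 0 := hker x₁ hDx₁
  have hMx₁ : (D + dlam • F) *ᵥ x₁ = 0 := by
    rw [add_mulVec, smul_mulVec, hDx₁, hFx₁, smul_zero, add_zero]
  have hxsplit : x = x₁ + x₂ := by rw [hx₁, sub_add_cancel]
  have key : x ⬝ᵥ ((D + dlam • F) *ᵥ x) = x₂ ⬝ᵥ (D *ᵥ x₂) + dlam * (x₂ ⬝ᵥ (F *ᵥ x₂)) := by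
    have hM : (D + dlam • F) *ᵥ x = (D + dlam • F) *ᵥ x₂ := by
      conv_lhs => rw [hxsplit]
      rw [mulVec_add, hMx₁, zero_add]
    have hz : x₁ ⬝ᵥ ((D + dlam • F) *ᵥ x₂) = 0 := by
      rw [dotProduct_mulVec, ← mulVec_transpose, hMsymT, hMx₁, zero_dotProduct]
    calc x ⬝ᵥ ((D + dlam • F) *ᵥ x)
        = x₁ ⬝ᵥ ((D + dlam • F) *ᵥ x₂) + x₂ ⬝ᵥ ((D + dlam • F) *ᵥ x₂) := by
          rw [hM]; conv_lhs => rw [hxsplit]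
          rw [add_dotProduct]
      _ = x₂ ⬝ᵥ ((D + dlam • F) *ᵥ x₂) := by rw [hz, zero_add]
      _ = x₂ ⬝ᵥ (D *ᵥ x₂) + dlam * (x₂ ⬝ᵥ (F *ᵥ x₂)) := by
          rw [add_mulVec, smul_mulVec, dotProduct_add, dotProduct_smul, smul_eq_mul]
  rw [key]
  -- lower bound on D part
  have hq1 : x₂ ⬝ᵥ (D *ᵥ x₂) = ∑ i, μ i * (c₂ i)^2 := by
    rw [coef_quad hDh x₂, ← hU, hcx₂]
  have hq2 : x₂ ⬝ᵥ x₂ = ∑ i, (c₂ i)^2 := by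
    rw [coef_norm hDh x₂, ← hU, hcx₂]
  have hlow : mumin * (x₂ ⬝ᵥ x₂) ≤ x₂ ⬝ᵥ (D *ᵥ x₂) := by
    rw [hq1, hq2, Finset.mul_sum]
    apply Finset.sum_le_sum; intro i _
    by_cases h : μ i = 0
    · simp [hc₂, h]
    · exact mul_le_mul_of_nonneg_right (hDev2 i h) (sq_nonneg _)
  obtain ⟨hF1, hF2⟩ := rayleigh_bounds hFh lminF lmaxF hFev x₂
  have hs : 0 ≤ x₂ ⬝ᵥ x₂ := dps x₂
  have hdl1 : -mumin ≤ dlam * lmaxF := by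
    rw [div_le_iff₀ hpos] at hlb; linarith
  have hdl2 : -mumin ≤ dlam * lminF := by
    rw [le_div_iff_of_neg hneg] at hub; linarith
  rcases le_or_gt 0 dlam with h | h
  · nlinarith [mul_le_mul_of_nonneg_left hF1 h, mul_le_mul_of_nonneg_right hdl2 hs]
  · nlinarith [mul_le_mul_of_nonpos_left hF2 h.le, mul_le_mul_of_nonneg_right hdl1 hs]
end
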